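/- For every FO[<] sentence φ in prenex normal form, the HyperLTL sentence φ̂ is stretch-invariant: for every finite word w over 2^AP and all stretch functions f and g, enc(w,f) ⊨ φ̂ if and only if enc(w,g) ⊨ φ̂. -/
import Mathlib


/-! ### HyperLTL: syntax and semantics -/

/-- A trace over a set `AP` of atomic propositions. -/
abbrev Trace (AP : Type) : Type := ℕ → Set AP

/-- The suffix of a trace from position `j` onwards. -/
def Trace.shift {AP : Type} (t : Trace AP) (j : ℕ) : Trace AP := fun i => t (i + j)

/-- Quantifier-free HyperLTL formulas; trace variables are natural numbers. -/
inductive QF (AP : Type) : Type where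
  | atom : AP → ℕ → QF AP
  | neg  : QF AP → QF AP
  | disj : QF AP → QF AP → QF AP
  | next : QF AP → QF AP
  | untl : QF AP → QF AP → QF AP

/-- HyperLTL formulas: a block of trace quantifiers followed by a
quantifier-free formula (HyperLTL formulas are in prenex normal form). -/
inductive HFormula (AP : Type) : Type where
  | ex  : ℕ → HFormula AP → HFormula AP
  | all : ℕ → HFormula AP → HFormula AP
  | qf  : QF AP → HFormula AP

/-- The simultaneous shift of a trace assignment. -/
def shiftAsg {AP : Type} (As : ℕ → Trace AP) (j : ℕ) : ℕ → Trace AP :=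
  fun x => Trace.shift (As x) j

/-- Semantics of quantifier-free HyperLTL formulas w.r.t. a trace assignment. -/
def QF.sat {AP : Type} : QF AP → (ℕ → Trace AP) → Prop
  | .atom a x, As => a ∈ As x 0
  | .neg ψ, As => ¬ ψ.sat As
  | .disj ψ₁ ψ₂, As => ψ₁.sat As ∨ ψ₂.sat As
  | .next ψ, As => ψ.sat (shiftAsg As 1)
  | .untl ψ₁ ψ₂, As => ∃ j, ψ₂.sat (shiftAsg As j) ∧ ∀ j' < j, ψ₁.sat (shiftAsg As j')

/-- Semantics of HyperLTL formulas w.r.t. a set of traces and a trace assignment. -/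
def HFormula.sat {AP : Type} : HFormula AP → Set (Trace AP) → (ℕ → Trace AP) → Prop
  | .ex x φ, T, As => ∃ t ∈ T, φ.sat T (Function.update As x t)
  | .all x φ, T, As => ∀ t ∈ T, φ.sat T (Function.update As x t)
  | .qf ψ, _, As => ψ.sat As

def QF.freeVars {AP : Type} : QF AP → Set ℕ
  | .atom _ x => {x}
  | .neg ψ => ψ.freeVars
  | .disj ψ₁ ψ₂ => ψ₁.freeVars ∪ ψ₂.freeVars
  | .next ψ => ψ.freeVars
  | .untl ψ₁ ψ₂ => ψ₁.freeVars ∪ ψ₂.freeVars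

def HFormula.freeVars {AP : Type} : HFormula AP → Set ℕ
  | .ex x φ => φ.freeVars \ {x}
  | .all x φ => φ.freeVars \ {x}
  | .qf ψ => ψ.freeVars

/-- A sentence is a formula without free variables. -/
def HFormula.IsSentence {AP : Type} (φ : HFormula AP) : Prop := φ.freeVars = ∅

/-- `T` is a model of `φ` (for sentences the initial assignment is irrelevant). -/
def HModels {AP : Type} (T : Set (Trace AP)) (φ : HFormula AP) : Prop :=
  φ.sat T (fun _ _ => ∅)

/-- A HyperLTL sentence is satisfiable if it has a model. -/
def HSatisfiable {AP : Type} (φ : HFormula AP) : Prop := ∃ T, HModels T φ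

/-! ### Finite words, stretch functions, and encodings of words as trace sets -/

/-- A finite word over `2^AP`: only letters at positions `< len` are relevant. -/
structure FinWord (AP : Type) : Type where
  len : ℕ
  letter : ℕ → Set AP

/-- A stretch function is strictly monotone with positive first value. -/
def IsStretch (f : ℕ → ℕ) : Prop := StrictMono f ∧ 0 < f 0

/-- The trace encoding position `n` of the word `w`, w.r.t. the stretch function `f`.
The fresh proposition `o` is represented by `none`. -/
def encTrace {AP : Type} (w : FinWord AP) (f : ℕ → ℕ) (n : ℕ) : Trace (Option AP) :=
  fun i => {x | (∃ a : AP, x = some a ∧ i = 0 ∧ a ∈ w.letter n) ∨ (x = none ∧ i = f n)}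

/-- The encoding `enc(w, f)` of a finite word `w` as a set of traces. -/
def encSet {AP : Type} (w : FinWord AP) (f : ℕ → ℕ) : Set (Trace (Option AP)) :=
  {t | ∃ n, n < w.len ∧ t = encTrace w f n}

/-! ### First-order logic over finite words -/

/-- FO[<] formulas over finite words; variables are natural numbers. -/
inductive FO (AP : Type) : Type where
  | atom : AP → ℕ → FO AP
  | le : ℕ → ℕ → FO AP
  | neg : FO AP → FO AP
  | disj : FO AP → FO AP → FO AP
  | ex : ℕ → FO AP → FO AP
  | all : ℕ → FO AP → FO AP

/-- Semantics of FO[<] over a finite word, w.r.t. a position assignment. -/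
def FO.sat {AP : Type} : FO AP → FinWord AP → (ℕ → ℕ) → Prop
  | .atom a x, w, v => a ∈ w.letter (v x)
  | .le x y, _, v => v x ≤ v y
  | .neg φ, w, v => ¬ φ.sat w v
  | .disj φ ψ, w, v => φ.sat w v ∨ ψ.sat w v
  | .ex x φ, w, v => ∃ n, n < w.len ∧ φ.sat w (Function.update v x n)
  | .all x φ, w, v => ∀ n, n < w.len → φ.sat w (Function.update v x n)

def FO.freeVars {AP : Type} : FO AP → Set ℕ
  | .atom _ x => {x}
  | .le x y => {x, y}
  | .neg φ => φ.freeVars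
  | .disj φ ψ => φ.freeVars ∪ ψ.freeVars
  | .ex x φ => φ.freeVars \ {x}
  | .all x φ => φ.freeVars \ {x}

def FO.IsQF {AP : Type} : FO AP → Prop
  | .atom _ _ => True
  | .le _ _ => True
  | .neg φ => φ.IsQF
  | .disj φ ψ => φ.IsQF ∧ ψ.IsQF
  | .ex _ _ => False
  | .all _ _ => False

def FO.IsPrenex {AP : Type} : FO AP → Prop
  | .ex _ φ => φ.IsPrenex
  | .all _ φ => φ.IsPrenex
  | φ => φ.IsQF

/-- A word `w` satisfies the FO[<] sentence `φ`. -/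
def FOModels {AP : Type} (w : FinWord AP) (φ : FO AP) : Prop := φ.sat w (fun _ => 0)

/-! ### The translation from FO[<] to HyperLTL -/

/-- The derived eventually operator `F ψ` (as `(ψ ∨ ¬ψ) U ψ`). -/
def QF.ev {AP : Type} (ψ : QF AP) : QF AP := .untl (.disj ψ (.neg ψ)) ψ

/-- Conjunction, derived from negation and disjunction. -/
def QF.conj {AP : Type} (ψ₁ ψ₂ : QF AP) : QF AP := .neg (.disj (.neg ψ₁) (.neg ψ₂))

/-- The HyperLTL rendering `F(o_x ∧ F o_y)` of the FO[<] atom `x ≤ y`. -/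
def leHat {AP : Type} (x y : ℕ) : QF (Option AP) :=
  QF.ev (QF.conj (.atom none x) (QF.ev (.atom none y)))

/-- Translation of the quantifier-free part: `a(x)` becomes `a_x` and
`x ≤ y` becomes `F(o_x ∧ F o_y)`. -/
def FO.hatQF {AP : Type} : FO AP → QF (Option AP)
  | .atom a x => .atom (some a) x
  | .le x y => leHat x y
  | .neg φ => .neg φ.hatQF
  | .disj φ ψ => .disj φ.hatQF ψ.hatQF
  | .ex _ _ => .atom none 0
  | .all _ _ => .atom none 0

/-- The HyperLTL formula `φ̂` associated with a prenex FO[<] formula `φ`: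
the quantifier prefix is kept, word variables becoming trace variables. -/
def FO.hat {AP : Type} : FO AP → HFormula (Option AP)
  | .ex x φ => .ex x φ.hat
  | .all x φ => .all x φ.hat
  | φ => .qf φ.hatQF

/-! ### Auxiliary lemmas -/

lemma some_mem_encTrace {AP : Type} {w : FinWord AP} {f : ℕ → ℕ} {n i : ℕ} {a : AP} :
    some a ∈ encTrace w f n i ↔ i = 0 ∧ a ∈ w.letter n := by
  simp [encTrace]

lemma none_mem_encTrace {AP : Type} {w : FinWord AP} {f : ℕ → ℕ} {n i : ℕ} :
    (none : Option AP) ∈ encTrace w f n i ↔ i = f n := by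
  simp [encTrace]

lemma atom_sat {AP : Type} (a : AP) (x : ℕ) (As : ℕ → Trace AP) :
    (QF.atom a x).sat As ↔ a ∈ As x 0 := Iff.rfl

lemma ev_sat {AP : Type} (ψ : QF AP) (As : ℕ → Trace AP) :
    (QF.ev ψ).sat As ↔ ∃ j, ψ.sat (shiftAsg As j) := by
  constructor
  · rintro ⟨j, h, -⟩; exact ⟨j, h⟩
  · rintro ⟨j, h⟩
    refine ⟨j, h, fun j' _ => ?_⟩
    by_cases hc : ψ.sat (shiftAsg As j')
    · exact Or.inl hc
    · exact Or.inr hc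

lemma conj_sat {AP : Type} (ψ₁ ψ₂ : QF AP) (As : ℕ → Trace AP) :
    (QF.conj ψ₁ ψ₂).sat As ↔ ψ₁.sat As ∧ ψ₂.sat As := by
  simp [QF.conj, QF.sat]

lemma leHat_sat {AP : Type} {w : FinWord AP} {f : ℕ → ℕ} (hf : IsStretch f)
    {x y nx ny : ℕ} {As : ℕ → Trace (Option AP)}
    (hx : As x = encTrace w f nx) (hy : As y = encTrace w f ny) :
    (leHat x y).sat As ↔ nx ≤ ny := by
  have key : (leHat x y).sat As ↔ ∃ j, j = f nx ∧ ∃ k, k + j = f ny := by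
    simp only [leHat, ev_sat, conj_sat, atom_sat, shiftAsg, Trace.shift, hx, hy,
      none_mem_encTrace, Nat.zero_add]
  rw [key]
  constructor
  · rintro ⟨j, rfl, k, hk⟩
    have : f nx ≤ f ny := by omega
    exact hf.1.le_iff_le.mp this
  · intro h
    have : f nx ≤ f ny := hf.1.le_iff_le.mpr h
    exact ⟨f nx, rfl, f ny - f nx, by omega⟩

lemma qf_hat_sat {AP : Type} {w : FinWord AP} {f : ℕ → ℕ} (hf : IsStretch f)
    (ψ : FO AP) (hq : ψ.IsQF) (v : ℕ → ℕ) (As : ℕ → Trace (Option AP))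
    (h : ∀ x ∈ ψ.freeVars, As x = encTrace w f (v x)) :
    ψ.hatQF.sat As ↔ ψ.sat w v := by
  induction ψ with
  | atom a x =>
    have hx := h x (by simp [FO.freeVars])
    simp [FO.hatQF, QF.sat, FO.sat, hx, some_mem_encTrace]
  | le x y =>
    have hx := h x (by simp [FO.freeVars])
    have hy := h y (by simp [FO.freeVars])
    simpa [FO.hatQF, FO.sat] using leHat_sat hf hx hy
  | neg φ ih =>
    simp only [FO.hatQF, QF.sat, FO.sat]
    rw [ih hq (fun x hx => h x hx)]
  | disj φ ψ ih₁ ih₂ =>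
    simp only [FO.hatQF, QF.sat, FO.sat]
    rw [ih₁ hq.1 (fun x hx => h x (Or.inl hx)), ih₂ hq.2 (fun x hx => h x (Or.inr hx))]
  | ex x φ ih => exact absurd hq id
  | all x φ ih => exact absurd hq id

lemma hat_sat {AP : Type} {w : FinWord AP} {f : ℕ → ℕ} (hf : IsStretch f)
    (φ : FO AP) (hpre : φ.IsPrenex) (v : ℕ → ℕ) (As : ℕ → Trace (Option AP))
    (h : ∀ x ∈ φ.freeVars, v x < w.len ∧ As x = encTrace w f (v x)) :
    φ.hat.sat (encSet w f) As ↔ φ.sat w v := by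
  induction φ generalizing v As with
  | ex x φ ih =>
    simp only [FO.hat, HFormula.sat, FO.sat]
    constructor
    · rintro ⟨t, ⟨n, hn, rfl⟩, ht⟩
      refine ⟨n, hn, ?_⟩
      rw [← ih hpre (Function.update v x n) (Function.update As x (encTrace w f n))
        (fun y hy => ?_)]
      · exact ht
      · by_cases hxy : y = x
        · subst hxy; simp [hn]
        · simp only [Function.update_of_ne hxy]
          exact h y ⟨hy, hxy⟩
    · rintro ⟨n, hn, hsat⟩
      refine ⟨encTrace w f n, ⟨n, hn, rfl⟩, ?_⟩
      rw [ih hpre (Function.update v x n) (Function.update As x (encTrace w f n))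
        (fun y hy => ?_)]
      · exact hsat
      · by_cases hxy : y = x
        · subst hxy; simp [hn]
        · simp only [Function.update_of_ne hxy]
          exact h y ⟨hy, hxy⟩
  | all x φ ih =>
    simp only [FO.hat, HFormula.sat, FO.sat]
    constructor
    · intro hall n hn
      rw [← ih hpre (Function.update v x n) (Function.update As x (encTrace w f n))
        (fun y hy => ?_)]
      · exact hall _ ⟨n, hn, rfl⟩
      · by_cases hxy : y = x
        · subst hxy; simp [hn]
        · simp only [Function.update_of_ne hxy]
          exact h y ⟨hy, hxy⟩
    · rintro hall t ⟨n, hn, rfl⟩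
      rw [ih hpre (Function.update v x n) (Function.update As x (encTrace w f n))
        (fun y hy => ?_)]
      · exact hall n hn
      · by_cases hxy : y = x
        · subst hxy; simp [hn]
        · simp only [Function.update_of_ne hxy]
          exact h y ⟨hy, hxy⟩
  | atom a x =>
    exact qf_hat_sat hf _ hpre v As (fun y hy => (h y hy).2)
  | le x y =>
    exact qf_hat_sat hf _ hpre v As (fun y hy => (h y hy).2)
  | neg φ ih =>
    exact qf_hat_sat hf _ hpre v As (fun y hy => (h y hy).2)
  | disj φ ψ ih₁ ih₂ =>
    exact qf_hat_sat hf _ hpre v As (fun y hy => (h y hy).2)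

/-- **Stretch invariance**: for every FO[<] sentence `φ` in prenex normal form,
the HyperLTL sentence `φ̂` is stretch-invariant. -/
theorem hat_stretch_invariant (AP : Type) [Fintype AP] (φ : FO AP)
    (hpre : φ.IsPrenex) (hsent : φ.freeVars = ∅)
    (w : FinWord AP) (f g : ℕ → ℕ) (hf : IsStretch f) (hg : IsStretch g) :
    HModels (encSet w f) φ.hat ↔ HModels (encSet w g) φ.hat := by
  have hempty : ∀ x ∈ φ.freeVars, (fun _ => 0 : ℕ → ℕ) x < w.len ∧
      (fun _ _ => ∅ : ℕ → Trace (Option AP)) x = encTrace w f x := by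
    simp [hsent]
  unfold HModels
  rw [hat_sat hf φ hpre (fun _ => 0) _ (by simp [hsent]),
      hat_sat hg φ hpre (fun _ => 0) _ (by simp [hsent])]
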